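/- arXiv:2008.00433 — 2 statements merged into one kernel-verified Lean document; each statement's English description precedes it below -/
import Mathlib

section
/- Let A(X) = ∑_{i=0}^m a_i X^i and B(X) = ∑_{j=0}^n b_j X^j be polynomials in C[X] of respective degrees m and n. Then the absolute value of their resultant satisfies |Res(A,B)| ≤ (∑_{i=0}^m |a_i|^2)^{n/2} · (∑_{j=0}^n |b_j|^2)^{m/2}. -/
/-!
Hadamard's inequality bounds `|det M|²` by the product of the squared Euclidean lengths of the
rows of `M`: once the rows are scaled to unit length, `M * Mᴴ` is positive semidefinite with unit
diagonal, so its eigenvalues are nonnegative and sum to the size of `M`, and AM-GM bounds their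
product, the determinant, by `1`. The Sylvester matrix has `n` rows that are shifted copies of the
coefficient vector of `A` and `m` that are shifted copies of that of `B`.
-/

open Polynomial Finset
open scoped ComplexOrder

/-- The Sylvester matrix of two polynomials `A`, `B`, viewed as polynomials of degrees
`m` and `n` respectively: the first `n` rows contain shifted coefficient vectors of `A`
and the last `m` rows contain shifted coefficient vectors of `B`. -/
noncomputable def sylvesterMatrix {R : Type*} [CommRing R] (A B : R[X]) (m n : ℕ) :
    Matrix (Fin (n + m)) (Fin (n + m)) R :=
  Matrix.of fun i j =>
    if (i : ℕ) < n then
      (if (i : ℕ) ≤ (j : ℕ) ∧ (j : ℕ) ≤ (i : ℕ) + m then A.coeff ((j : ℕ) - (i : ℕ)) else 0)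
    else
      (if (i : ℕ) - n ≤ (j : ℕ) ∧ (j : ℕ) ≤ ((i : ℕ) - n) + n then
        B.coeff ((j : ℕ) - ((i : ℕ) - n)) else 0)

/-- The resultant of `A` and `B` of degrees `m`, `n`: the determinant of their
Sylvester matrix. -/
noncomputable def resultant {R : Type*} [CommRing R] (A B : R[X]) (m n : ℕ) : R :=
  (sylvesterMatrix A B m n).det

theorem Real.prod_le_one_of_sum_eq_card {ι : Type*} [Fintype ι] {z : ι → ℝ} (hz : ∀ i, 0 ≤ z i)
    (hsum : ∑ i, z i = Fintype.card ι) : ∏ i, z i ≤ 1 := by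
  rcases isEmpty_or_nonempty ι with hι | hι
  · simp
  have hcard : (0 : ℝ) < Fintype.card ι := by exact_mod_cast Fintype.card_pos
  have hmean := Real.geom_mean_le_arith_mean univ (fun _ ↦ 1) z (fun _ _ ↦ zero_le_one)
    (by simpa using hcard) (fun i _ ↦ hz i)
  simp only [Real.rpow_one, one_mul, sum_const, card_univ, nsmul_eq_mul, mul_one, hsum,
    div_self hcard.ne'] at hmean
  by_contra! hlt
  exact hmean.not_gt (Real.one_lt_rpow hlt (by positivity))

namespace Matrix

variable {n 𝕜 : Type*} [Fintype n] [RCLike 𝕜]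

theorem PosSemidef.det_le_one_of_diag_eq_one [DecidableEq n] {H : Matrix n n 𝕜}
    (hH : H.PosSemidef) (hdiag : ∀ i, H i i = 1) : H.det ≤ 1 := by
  have hsum : ∑ i, hH.isHermitian.eigenvalues i = Fintype.card n := by
    have htrace := hH.isHermitian.trace_eq_sum_eigenvalues
    simp only [trace, diag_apply, hdiag, sum_const, card_univ, nsmul_eq_mul, mul_one] at htrace
    exact_mod_cast htrace.symm
  rw [hH.isHermitian.det_eq_prod_eigenvalues, ← RCLike.ofReal_prod, ← RCLike.ofReal_one,
    RCLike.ofReal_le_ofReal]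
  exact Real.prod_le_one_of_sum_eq_card hH.eigenvalues_nonneg hsum

theorem det_mul_conjTranspose_self [DecidableEq n] (A : Matrix n n 𝕜) :
    (A * Aᴴ).det = ((‖A.det‖ ^ 2 : ℝ) : 𝕜) := by
  rw [det_mul, det_conjTranspose, RCLike.star_def, RCLike.mul_conj]; push_cast; rfl

theorem mul_conjTranspose_self_apply_self (A : Matrix n n 𝕜) (i : n) :
    (A * Aᴴ) i i = ((∑ j, ‖A i j‖ ^ 2 : ℝ) : 𝕜) := by
  simp [mul_apply, RCLike.mul_conj]

theorem sq_norm_det_le_prod_sum_sq_norm [DecidableEq n] (M : Matrix n n 𝕜) :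
    ‖M.det‖ ^ 2 ≤ ∏ i, ∑ j, ‖M i j‖ ^ 2 := by
  set r : n → ℝ := fun i ↦ ∑ j, ‖M i j‖ ^ 2
  by_cases hzero : ∃ i, r i = 0
  · obtain ⟨i, hi⟩ := hzero
    have hrow : ∀ j, M i j = 0 := by
      simpa [r, sum_eq_zero_iff_of_nonneg] using hi
    rw [det_eq_zero_of_row_eq_zero i hrow, norm_zero, zero_pow two_ne_zero]
    exact prod_nonneg fun i _ ↦ sum_nonneg fun j _ ↦ sq_nonneg _
  simp only [not_exists] at hzero
  have hr_pos : ∀ i, 0 < r i := fun i ↦ (sum_nonneg fun j _ ↦ sq_nonneg _).lt_of_ne' (hzero i)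
  set N := diagonal (fun i ↦ ((√(r i))⁻¹ : 𝕜)) * M
  have hN_diag : ∀ i, (N * Nᴴ) i i = 1 := by
    intro i
    have hrow : ∑ j, ‖N i j‖ ^ 2 = 1 := by
      simp only [N, diagonal_mul, norm_mul, norm_inv, RCLike.norm_ofReal, mul_pow, inv_pow, sq_abs,
        Real.sq_sqrt (hr_pos i).le, ← mul_sum]
      exact inv_mul_cancel₀ (hzero i)
    rw [mul_conjTranspose_self_apply_self, hrow, RCLike.ofReal_one]
  have hN_det : ‖N.det‖ ^ 2 = (∏ i, r i)⁻¹ * ‖M.det‖ ^ 2 := by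
    simp only [N, det_mul, det_diagonal, prod_inv_distrib, norm_mul, norm_inv, norm_prod,
      RCLike.norm_ofReal, mul_pow, inv_pow, ← prod_pow, sq_abs, Real.sq_sqrt (hr_pos _).le]
  have hN_le : ‖N.det‖ ^ 2 ≤ 1 := by
    have := (posSemidef_self_mul_conjTranspose N).det_le_one_of_diag_eq_one hN_diag
    rwa [det_mul_conjTranspose_self, ← RCLike.ofReal_one, RCLike.ofReal_le_ofReal] at this
  rw [hN_det, inv_mul_le_iff₀ (prod_pos fun i _ ↦ hr_pos i), mul_one] at hN_le
  exact hN_le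

end Matrix

theorem Fin.sum_window_eq_sum_range {M : Type*} [AddCommMonoid M] (g : ℕ → M) {a l q : ℕ}
    (h : a + l < q) :
    ∑ j : Fin q, (if a ≤ (j : ℕ) ∧ (j : ℕ) ≤ a + l then g ((j : ℕ) - a) else 0) =
      ∑ k ∈ range (l + 1), g k := by
  rw [Fin.sum_univ_eq_sum_range (fun j ↦ if a ≤ j ∧ j ≤ a + l then g (j - a) else 0), ← sum_filter]
  have hwindow : {j ∈ range q | a ≤ j ∧ j ≤ a + l} = Ico a (a + (l + 1)) := by
    ext j; simp only [mem_filter, mem_range, mem_Ico]; omega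
  rw [hwindow, sum_Ico_eq_sum_range]
  simp only [Nat.add_sub_cancel_left]

section Sylvester

variable {R M : Type*} [CommRing R] [CommSemiring M]

theorem sum_sylvesterMatrix_row (A B : R[X]) (m n : ℕ) (f : R → M) (hf : f 0 = 0)
    (i : Fin (n + m)) :
    ∑ j, f (sylvesterMatrix A B m n i j) =
      if (i : ℕ) < n then ∑ k ∈ range (m + 1), f (A.coeff k)
      else ∑ k ∈ range (n + 1), f (B.coeff k) := by
  by_cases hi : (i : ℕ) < n
  · simp only [sylvesterMatrix, Matrix.of_apply, if_pos hi, apply_ite f, hf]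
    exact Fin.sum_window_eq_sum_range (fun k ↦ f (A.coeff k)) (by omega)
  · simp only [sylvesterMatrix, Matrix.of_apply, if_neg hi, apply_ite f, hf]
    exact Fin.sum_window_eq_sum_range (fun k ↦ f (B.coeff k)) (by omega)

theorem prod_sum_sylvesterMatrix (A B : R[X]) (m n : ℕ) (f : R → M) (hf : f 0 = 0) :
    ∏ i, ∑ j, f (sylvesterMatrix A B m n i j) =
      (∑ k ∈ range (m + 1), f (A.coeff k)) ^ n * (∑ k ∈ range (n + 1), f (B.coeff k)) ^ m := by
  simp only [sum_sylvesterMatrix_row A B m n f hf]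
  rw [Fin.prod_univ_eq_prod_range (fun i ↦ if i < n then _ else _), prod_range_add,
    prod_congr rfl fun i hi ↦ if_pos (mem_range.mp hi),
    prod_congr rfl fun i _ ↦ if_neg (Nat.not_lt.mpr (Nat.le_add_right n i)),
    prod_const, prod_const, card_range, card_range]

end Sylvester

theorem abs_resultant_le_general (m n : ℕ) (A B : ℂ[X]) :
    ‖_root_.resultant A B m n‖ ≤
      (∑ i ∈ Finset.range (m + 1), ‖A.coeff i‖ ^ 2) ^ ((n : ℝ) / 2) *
        (∑ j ∈ Finset.range (n + 1), ‖B.coeff j‖ ^ 2) ^ ((m : ℝ) / 2) := by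
  set a := ∑ i ∈ Finset.range (m + 1), ‖A.coeff i‖ ^ 2
  set b := ∑ j ∈ Finset.range (n + 1), ‖B.coeff j‖ ^ 2
  have ha : 0 ≤ a := sum_nonneg fun _ _ ↦ sq_nonneg _
  have hb : 0 ≤ b := sum_nonneg fun _ _ ↦ sq_nonneg _
  have hsq : ‖_root_.resultant A B m n‖ ^ 2 ≤ a ^ n * b ^ m := by
    rw [← prod_sum_sylvesterMatrix A B m n (‖·‖ ^ 2) (by simp)]
    exact (sylvesterMatrix A B m n).sq_norm_det_le_prod_sum_sq_norm
  rw [← pow_le_pow_iff_left₀ (norm_nonneg _) (by positivity) two_ne_zero, mul_pow,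
    ← Real.rpow_natCast (a ^ _), ← Real.rpow_natCast (b ^ _), ← Real.rpow_mul ha,
    ← Real.rpow_mul hb]
  simpa using hsq

theorem abs_resultant_le (m n : ℕ) (A B : ℂ[X])
    (hA : A.natDegree = m) (hB : B.natDegree = n) :
    ‖_root_.resultant A B m n‖ ≤
      (∑ i ∈ Finset.range (m + 1), ‖A.coeff i‖ ^ 2) ^ ((n : ℝ) / 2) *
        (∑ j ∈ Finset.range (n + 1), ‖B.coeff j‖ ^ 2) ^ ((m : ℝ) / 2) :=
  abs_resultant_le_general m n A B
end

section
/- Let ψ_n be the division polynomials of the Legendre curve E_λ : Y² = X(X−1)(X−λ). Then for every ε > 0 there is a constant c(ε) such that the height satisfies h(ψ_n) ≤ c(ε) n^{2+ε} for all n ≥ 1, i.e., h(ψ_n) ≤ n^{2+o(1)}. -/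
open MvPolynomial

/-- The polynomial ring `ℤ[λ, X, Y]`, with `λ, X, Y` the variables `0, 1, 2`. -/
abbrev R3 := MvPolynomial (Fin 3) ℤ

noncomputable def lamP : R3 := X 0
noncomputable def XP : R3 := X 1
noncomputable def YP : R3 := X 2

/-- The height of an integer multivariate polynomial: the logarithm of the maximum of the
absolute values of its coefficients. -/
noncomputable def mvHeight (G : R3) : ℝ :=
  Real.log ((G.support.sup fun m => (G.coeff m).natAbs : ℕ) : ℝ)

/-! The ℓ¹-norm of the coefficients is subadditive and submultiplicative, and multiplying by
`2Y` only doubles it, so the recursion bounds `ℓ¹(ψ_n)` by sums of products of earlier bounds.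
With exponents `3n²` this is additive up to a constant along the recursion:
`(k+2)² + 3k² = (2k+1)² + 3` and `k² + (k+2)² + 2(k-1)² = (2k)² + 6`. An offset `-8`, counted
four times in each product of bounds but once in the target, absorbs that constant and the
factor `2` from the sum, so `ℓ¹(ψ_n) ≤ 2^(3n² - 8)` by strong induction, whence
`h(ψ_n) ≤ 3 log 2 · n²`. -/

namespace MvPolynomial

variable {σ : Type*}

def l1Norm (p : MvPolynomial σ ℤ) : ℕ := ∑ m ∈ p.support, (p.coeff m).natAbs

theorem l1Norm_eq_sum_of_support_subset {p : MvPolynomial σ ℤ} {s : Finset (σ →₀ ℕ)}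
    (h : p.support ⊆ s) : l1Norm p = ∑ m ∈ s, (p.coeff m).natAbs :=
  Finset.sum_subset h fun m _ hm => by simp [notMem_support_iff.mp hm]

@[simp]
theorem l1Norm_zero : l1Norm (0 : MvPolynomial σ ℤ) = 0 := by simp [l1Norm]

@[simp]
theorem l1Norm_neg (p : MvPolynomial σ ℤ) : l1Norm (-p) = l1Norm p := by
  simp [l1Norm, support_neg]

@[simp]
theorem l1Norm_monomial (m : σ →₀ ℕ) (c : ℤ) : l1Norm (monomial m c) = c.natAbs := by
  classical
  by_cases hc : c = 0 <;> simp [l1Norm, support_monomial, hc]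

@[simp]
theorem l1Norm_C (c : ℤ) : l1Norm (C c : MvPolynomial σ ℤ) = c.natAbs := l1Norm_monomial 0 c

@[simp]
theorem l1Norm_one : l1Norm (1 : MvPolynomial σ ℤ) = 1 := by simpa using l1Norm_C (σ := σ) 1

@[simp]
theorem l1Norm_ofNat (n : ℕ) [n.AtLeastTwo] : l1Norm (ofNat(n) : MvPolynomial σ ℤ) = n := by
  rw [← map_ofNat (C : ℤ →+* MvPolynomial σ ℤ) n, l1Norm_C]
  rfl

@[simp]
theorem l1Norm_X (i : σ) : l1Norm (X i : MvPolynomial σ ℤ) = 1 := l1Norm_monomial _ 1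

theorem l1Norm_add_le (p q : MvPolynomial σ ℤ) : l1Norm (p + q) ≤ l1Norm p + l1Norm q := by
  classical
  set s := p.support ∪ q.support
  rw [l1Norm_eq_sum_of_support_subset support_add,
    l1Norm_eq_sum_of_support_subset (Finset.subset_union_left : p.support ⊆ s),
    l1Norm_eq_sum_of_support_subset (Finset.subset_union_right : q.support ⊆ s),
    ← Finset.sum_add_distrib]
  exact Finset.sum_le_sum fun m _ => by simpa using Int.natAbs_add_le _ _

theorem l1Norm_sub_le (p q : MvPolynomial σ ℤ) : l1Norm (p - q) ≤ l1Norm p + l1Norm q := by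
  simpa [sub_eq_add_neg] using l1Norm_add_le p (-q)

theorem l1Norm_sum_le {ι : Type*} (s : Finset ι) (f : ι → MvPolynomial σ ℤ) :
    l1Norm (∑ i ∈ s, f i) ≤ ∑ i ∈ s, l1Norm (f i) :=
  Finset.le_sum_of_subadditive l1Norm l1Norm_zero.le l1Norm_add_le s f

theorem l1Norm_mul_le (p q : MvPolynomial σ ℤ) : l1Norm (p * q) ≤ l1Norm p * l1Norm q := by
  have hpq : p * q =
      ∑ a ∈ p.support, ∑ b ∈ q.support, monomial (a + b) (p.coeff a * q.coeff b) := by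
    conv_lhs => rw [p.as_sum, q.as_sum]
    simp only [Finset.sum_mul_sum, monomial_mul]
  calc l1Norm (p * q)
      ≤ ∑ a ∈ p.support, ∑ b ∈ q.support,
          l1Norm (monomial (a + b) (p.coeff a * q.coeff b)) := by
        rw [hpq]
        exact (l1Norm_sum_le _ _).trans (Finset.sum_le_sum fun a _ => l1Norm_sum_le _ _)
    _ = l1Norm p * l1Norm q := by
        simp only [l1Norm_monomial, Int.natAbs_mul]
        rw [l1Norm, l1Norm, Finset.sum_mul_sum]

theorem l1Norm_pow_le (p : MvPolynomial σ ℤ) (n : ℕ) : l1Norm (p ^ n) ≤ l1Norm p ^ n := by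
  induction n with
  | zero => simp
  | succ n ih =>
    rw [pow_succ, pow_succ]
    exact (l1Norm_mul_le _ _).trans (Nat.mul_le_mul_right _ ih)

theorem l1Norm_X_mul (i : σ) (p : MvPolynomial σ ℤ) : l1Norm (X i * p) = l1Norm p := by
  simp [l1Norm, support_X_mul, coeff_X_mul]

theorem l1Norm_C_mul (c : ℤ) (p : MvPolynomial σ ℤ) :
    l1Norm (C c * p) = c.natAbs * l1Norm p := by
  rcases eq_or_ne c 0 with rfl | hc
  · simp
  · rw [C_mul', l1Norm, l1Norm, support_smul_eq hc, Finset.mul_sum]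
    simp only [coeff_smul, smul_eq_mul, Int.natAbs_mul]

theorem natAbs_coeff_le_l1Norm (p : MvPolynomial σ ℤ) (m : σ →₀ ℕ) :
    (p.coeff m).natAbs ≤ l1Norm p := by
  by_cases hm : m ∈ p.support
  · exact Finset.single_le_sum (f := fun m => (p.coeff m).natAbs) (fun _ _ => Nat.zero_le _) hm
  · simp [notMem_support_iff.mp hm]

section

variable {p q : MvPolynomial σ ℤ} {a b : ℕ}

theorem l1Norm_add_le_of_le (hp : l1Norm p ≤ a) (hq : l1Norm q ≤ b) :
    l1Norm (p + q) ≤ a + b :=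
  (l1Norm_add_le p q).trans (add_le_add hp hq)

theorem l1Norm_sub_le_of_le (hp : l1Norm p ≤ a) (hq : l1Norm q ≤ b) :
    l1Norm (p - q) ≤ a + b :=
  (l1Norm_sub_le p q).trans (add_le_add hp hq)

theorem l1Norm_mul_le_of_le (hp : l1Norm p ≤ a) (hq : l1Norm q ≤ b) :
    l1Norm (p * q) ≤ a * b :=
  (l1Norm_mul_le p q).trans (Nat.mul_le_mul hp hq)

theorem l1Norm_pow_le_of_le (n : ℕ) (hp : l1Norm p ≤ a) : l1Norm (p ^ n) ≤ a ^ n :=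
  (l1Norm_pow_le p n).trans (Nat.pow_le_pow_left hp n)

end

theorem l1Norm_mul_pow_sub_mul_pow_le (p q r s : MvPolynomial σ ℤ) (n : ℕ) :
    l1Norm (p * q ^ n - r * s ^ n) ≤ l1Norm p * l1Norm q ^ n + l1Norm r * l1Norm s ^ n :=
  l1Norm_sub_le_of_le (l1Norm_mul_le_of_le le_rfl (l1Norm_pow_le _ _))
    (l1Norm_mul_le_of_le le_rfl (l1Norm_pow_le _ _))

end MvPolynomial

theorem two_pow_add_two_pow_le {x y z : ℕ} (hx : x < z) (hy : y < z) :
    2 ^ x + 2 ^ y ≤ 2 ^ z := by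
  calc 2 ^ x + 2 ^ y ≤ 2 ^ (z - 1) + 2 ^ (z - 1) := by gcongr <;> omega
    _ = 2 ^ z := by rw [← two_mul, ← pow_succ', Nat.sub_add_cancel (by omega)]

/-- Truncated subtraction makes this `0` at `n = 1`, which the recursion needs there since
`ψ₁ = 1`; `8` is the least offset for which the induction closes with that value. -/
def divisionExponent (n : ℕ) : ℕ := 3 * n ^ 2 - 8

theorem divisionExponent_odd_lt {k : ℕ} (hk : 2 ≤ k) :
    divisionExponent (k + 2) + 3 * divisionExponent k < divisionExponent (2 * k + 1) ∧
      divisionExponent (k - 1) + 3 * divisionExponent (k + 1) < divisionExponent (2 * k + 1) := by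
  obtain ⟨j, rfl⟩ := Nat.exists_eq_add_of_le' hk
  rw [show j + 2 - 1 = j + 1 by omega]
  unfold divisionExponent
  constructor <;> ring_nf <;> omega

theorem divisionExponent_even_lt {k : ℕ} (hk : 3 ≤ k) :
    divisionExponent k + divisionExponent (k + 2) + 2 * divisionExponent (k - 1) <
        divisionExponent (2 * k) ∧
      divisionExponent k + divisionExponent (k - 2) + 2 * divisionExponent (k + 1) <
        divisionExponent (2 * k) := by
  obtain ⟨j, rfl⟩ := Nat.exists_eq_add_of_le' hk
  rw [show j + 3 - 1 = j + 2 by omega, show j + 3 - 2 = j + 1 by omega]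
  unfold divisionExponent
  constructor <;> ring_nf <;> omega

theorem le_two_pow_of_divisionRecursion (M : ℕ → ℕ)
    (hbase : ∀ n, 1 ≤ n → n ≤ 4 → M n ≤ 2 ^ divisionExponent n)
    (hodd : ∀ k, 2 ≤ k → M (2 * k + 1) ≤ M (k + 2) * M k ^ 3 + M (k - 1) * M (k + 1) ^ 3)
    (heven : ∀ k, 3 ≤ k →
      M (2 * k) ≤ M k * (M (k + 2) * M (k - 1) ^ 2 + M (k - 2) * M (k + 1) ^ 2))
    (n : ℕ) (hn : 1 ≤ n) : M n ≤ 2 ^ divisionExponent n := by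
  induction n using Nat.strong_induction_on with
  | _ n ih =>
  rcases le_or_gt n 4 with hn4 | hn4
  · exact hbase n hn hn4
  obtain ⟨k, rfl | rfl⟩ := Nat.even_or_odd' n
  · have hk : 3 ≤ k := by omega
    calc M (2 * k) ≤ M k * (M (k + 2) * M (k - 1) ^ 2 + M (k - 2) * M (k + 1) ^ 2) := heven k hk
      _ ≤ 2 ^ divisionExponent k *
          (2 ^ divisionExponent (k + 2) * (2 ^ divisionExponent (k - 1)) ^ 2
            + 2 ^ divisionExponent (k - 2) * (2 ^ divisionExponent (k + 1)) ^ 2) := by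
        gcongr <;> apply ih <;> omega
      _ = 2 ^ (divisionExponent k + divisionExponent (k + 2) + 2 * divisionExponent (k - 1))
          + 2 ^ (divisionExponent k + divisionExponent (k - 2) + 2 * divisionExponent (k + 1)) := by
        ring
      _ ≤ 2 ^ divisionExponent (2 * k) :=
        two_pow_add_two_pow_le (divisionExponent_even_lt hk).1 (divisionExponent_even_lt hk).2
  · have hk : 2 ≤ k := by omega
    calc M (2 * k + 1) ≤ M (k + 2) * M k ^ 3 + M (k - 1) * M (k + 1) ^ 3 := hodd k hk
      _ ≤ 2 ^ divisionExponent (k + 2) * (2 ^ divisionExponent k) ^ 3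
          + 2 ^ divisionExponent (k - 1) * (2 ^ divisionExponent (k + 1)) ^ 3 := by
        gcongr <;> apply ih <;> omega
      _ = 2 ^ (divisionExponent (k + 2) + 3 * divisionExponent k)
          + 2 ^ (divisionExponent (k - 1) + 3 * divisionExponent (k + 1)) := by
        ring
      _ ≤ 2 ^ divisionExponent (2 * k + 1) :=
        two_pow_add_two_pow_le (divisionExponent_odd_lt hk).1 (divisionExponent_odd_lt hk).2

theorem mvHeight_le_of_l1Norm_le {G : R3} {e : ℕ} (h : l1Norm G ≤ 2 ^ e) :
    mvHeight G ≤ e * Real.log 2 := by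
  have hsup : (G.support.sup fun m => (G.coeff m).natAbs) ≤ 2 ^ e :=
    Finset.sup_le fun m _ => (natAbs_coeff_le_l1Norm G m).trans h
  rw [mvHeight]
  rcases Nat.eq_zero_or_pos (G.support.sup fun m => (G.coeff m).natAbs) with h0 | hpos
  · rw [h0, Nat.cast_zero, Real.log_zero]
    positivity
  · rw [← Real.log_pow]
    exact Real.log_le_log (by exact_mod_cast hpos) (by exact_mod_cast hsup)

theorem divisionExponent_mul_log_two_le {n : ℕ} (hn : 1 ≤ n) {ε : ℝ} (hε : 0 ≤ ε) :
    divisionExponent n * Real.log 2 ≤ 3 * Real.log 2 * (n : ℝ) ^ (2 + ε) :=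
  calc divisionExponent n * Real.log 2 ≤ (3 * n ^ 2 : ℕ) * Real.log 2 := by
        gcongr; exact Nat.sub_le _ _
    _ = 3 * Real.log 2 * (n : ℝ) ^ (2 : ℝ) := by push_cast; rw [Real.rpow_two]; ring
    _ ≤ 3 * Real.log 2 * (n : ℝ) ^ (2 + ε) := by
        gcongr
        · exact_mod_cast hn
        · linarith

theorem l1Norm_two_mul_YP_mul (p : R3) : l1Norm (2 * YP * p) = 2 * l1Norm p := by
  rw [YP, mul_assoc, ← map_ofNat C 2, l1Norm_C_mul, l1Norm_X_mul]
  rfl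

theorem divisionPolynomial_height_le_general (ψ : ℕ → R3)
    (h1 : ψ 1 = 1) (h2 : ψ 2 = 2 * YP)
    (h3 : ψ 3 = 3 * XP ^ 4 - 4 * (1 + lamP) * XP ^ 3 + 6 * lamP * XP ^ 2 - lamP ^ 2)
    (h4 : ψ 4 = 2 * YP * (2 * XP ^ 6 - 4 * (1 + lamP) * XP ^ 5 + 10 * lamP * XP ^ 4
      - 10 * lamP ^ 2 * XP ^ 2 + 4 * lamP ^ 2 * (1 + lamP) * XP - 2 * lamP ^ 3))
    (hodd : ∀ k : ℕ, 2 ≤ k →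
      ψ (2 * k + 1) = ψ (k + 2) * ψ k ^ 3 - ψ (k - 1) * ψ (k + 1) ^ 3)
    (heven : ∀ k : ℕ, 2 ≤ k →
      2 * YP * ψ (2 * k) =
        ψ k * (ψ (k + 2) * ψ (k - 1) ^ 2 - ψ (k - 2) * ψ (k + 1) ^ 2)) :
    ∀ ε : ℝ, 0 < ε → ∃ c : ℝ, 0 < c ∧ ∀ n : ℕ, 1 ≤ n →
      mvHeight (ψ n) ≤ c * (n : ℝ) ^ (2 + ε) := by
  have hl1 : ∀ n, 1 ≤ n → l1Norm (ψ n) ≤ 2 ^ divisionExponent n := by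
    refine le_two_pow_of_divisionRecursion (fun n => l1Norm (ψ n)) ?_ (fun k hk => ?_)
      (fun k hk => ?_)
    · intro n hn hn4
      interval_cases n <;> simp only [h1, h2, h3, h4, lamP, XP, YP, divisionExponent] <;>
      -- the `apply`s build the bound `_` term by term; `norm_num` then compares it
      exact (show l1Norm _ ≤ _ by
        repeat' with_reducible first
          | apply l1Norm_sub_le_of_le
          | apply l1Norm_add_le_of_le
          | apply l1Norm_mul_le_of_le
          | apply l1Norm_pow_le_of_le
          | exact (l1Norm_X _).le
          | exact l1Norm_one.le
          | exact (l1Norm_ofNat _).le).trans (by norm_num)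
    · rw [hodd k hk]
      exact l1Norm_mul_pow_sub_mul_pow_le _ _ _ _ 3
    · calc l1Norm (ψ (2 * k)) ≤ l1Norm (2 * YP * ψ (2 * k)) := by
            rw [l1Norm_two_mul_YP_mul]; omega
        _ ≤ _ := by
            rw [heven k (by omega)]
            exact l1Norm_mul_le_of_le le_rfl (l1Norm_mul_pow_sub_mul_pow_le _ _ _ _ 2)
  intro ε hε
  exact ⟨3 * Real.log 2, by positivity, fun n hn =>
    (mvHeight_le_of_l1Norm_le (hl1 n hn)).trans (divisionExponent_mul_log_two_le hn hε.le)⟩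

/-- The height of the `n`-th division polynomial of the Legendre curve
`E_λ : Y² = X(X-1)(X-λ)` is at most `n^{2+o(1)}`: for every `ε > 0` there is a constant
`c(ε)` with `h(ψ_n) ≤ c(ε) n^{2+ε}` for all `n ≥ 1`. (The even-index recursion is stated
multiplied through by `2Y`.) -/
theorem divisionPolynomial_height_le (ψ : ℕ → R3)
    (h0 : ψ 0 = 0) (h1 : ψ 1 = 1) (h2 : ψ 2 = 2 * YP)
    (h3 : ψ 3 = 3 * XP ^ 4 - 4 * (1 + lamP) * XP ^ 3 + 6 * lamP * XP ^ 2 - lamP ^ 2)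
    (h4 : ψ 4 = 2 * YP * (2 * XP ^ 6 - 4 * (1 + lamP) * XP ^ 5 + 10 * lamP * XP ^ 4
      - 10 * lamP ^ 2 * XP ^ 2 + 4 * lamP ^ 2 * (1 + lamP) * XP - 2 * lamP ^ 3))
    (hodd : ∀ k : ℕ, 2 ≤ k →
      ψ (2 * k + 1) = ψ (k + 2) * ψ k ^ 3 - ψ (k - 1) * ψ (k + 1) ^ 3)
    (heven : ∀ k : ℕ, 2 ≤ k →
      2 * YP * ψ (2 * k) =
        ψ k * (ψ (k + 2) * ψ (k - 1) ^ 2 - ψ (k - 2) * ψ (k + 1) ^ 2)) :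
    ∀ ε : ℝ, 0 < ε → ∃ c : ℝ, 0 < c ∧ ∀ n : ℕ, 1 ≤ n →
      mvHeight (ψ n) ≤ c * (n : ℝ) ^ (2 + ε) :=
  divisionPolynomial_height_le_general ψ h1 h2 h3 h4 hodd heven
end
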